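/- Every element ĝ of the C-group Ĝ_O associated to an equipped group (G,O) can be written as ĝ = ĝ_1 ĝ_2^{-1} where ĝ_1 and ĝ_2 are positive elements (products of the generators y_g). -/

import Mathlib

/-!
The relation `y_b⁻¹ y_a y_b = y_{b⁻¹ a b}` makes the monoid `P` of positive elements stable under
conjugation by its own elements. Hence `P P⁻¹` is closed under multiplication, via
`p q⁻¹ p' q'⁻¹ = (p (q⁻¹ p' q)) (q' q)⁻¹`, and clearly under inversion; as it contains the
generators, it is the whole group.
-/

variable {G : Type*} [Group G]

/-- Relators of the C-group `Ĝ_O` associated to an equipped group `(G,O)`: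
`y_{g₁} y_{g₂} = y_{g₂} y_{g₂⁻¹ g₁ g₂}` and `y_{g₁} y_{g₂} = y_{g₁ g₂ g₁⁻¹} y_{g₁}`. -/
def cGroupRels (O : Set G) : Set (FreeGroup O) :=
  {w | (∃ (a b : O) (h : (b : G)⁻¹ * a * b ∈ O),
          w = FreeGroup.of a * FreeGroup.of b *
            (FreeGroup.of b * FreeGroup.of (⟨(b : G)⁻¹ * a * b, h⟩ : O))⁻¹) ∨
       (∃ (a b : O) (h : (a : G) * b * (a : G)⁻¹ ∈ O),
          w = FreeGroup.of a * FreeGroup.of b *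
            (FreeGroup.of (⟨(a : G) * b * (a : G)⁻¹, h⟩ : O) * FreeGroup.of a)⁻¹)}

/-- The C-group `Ĝ_O` associated to the equipped group `(G,O)`. -/
abbrev CGroup (O : Set G) : Type _ := PresentedGroup (cGroupRels O)

/-- The canonical homomorphism `γ : Ĝ_O → G`, `y_g ↦ g`. -/
def cGroupGamma (O : Set G) : CGroup O →* G :=
  PresentedGroup.toGroup (f := fun a : O => (a : G)) (by
    rintro r (⟨a, b, hm, rfl⟩ | ⟨a, b, hm, rfl⟩) <;> (simp <;> group))

/-- Positive elements of `Ĝ_O`: products of the generators `y_g`. -/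
def CGroup.Positive {O : Set G} (x : CGroup O) : Prop :=
  x ∈ Submonoid.closure (Set.range (fun a : O => PresentedGroup.of (rels := cGroupRels O) a))

section ConjugationInvariantSubmonoid

variable {M : Type*} [Group M]

theorem Submonoid.inv_mul_mul_mem_closure {S : Set M}
    (hS : ∀ s ∈ S, ∀ t ∈ S, s⁻¹ * t * s ∈ Submonoid.closure S)
    {p q : M} (hp : p ∈ Submonoid.closure S) (hq : q ∈ Submonoid.closure S) :
    q⁻¹ * p * q ∈ Submonoid.closure S := by
  induction hq using Submonoid.closure_induction generalizing p with
  | one => simpa using hp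
  | mem s hs =>
    induction hp using Submonoid.closure_induction with
    | one => simp
    | mem t ht => exact hS s hs t ht
    | mul x y _ _ hx hy =>
      have : s⁻¹ * (x * y) * s = (s⁻¹ * x * s) * (s⁻¹ * y * s) := by group
      exact this ▸ Submonoid.mul_mem _ hx hy
  | mul q r _ _ hq hr =>
    have : (q * r)⁻¹ * p * (q * r) = r⁻¹ * (q⁻¹ * p * q) * r := by group
    exact this ▸ hr (hq hp)

theorem Submonoid.exists_eq_mul_inv_of_mem_closure (P : Submonoid M)
    (hP : ∀ p ∈ P, ∀ q ∈ P, q⁻¹ * p * q ∈ P) {x : M}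
    (hx : x ∈ Subgroup.closure (P : Set M)) :
    ∃ p ∈ P, ∃ q ∈ P, x = p * q⁻¹ := by
  induction hx using Subgroup.closure_induction with
  | one => exact ⟨1, P.one_mem, 1, P.one_mem, by simp⟩
  | mem p hp => exact ⟨p, hp, 1, P.one_mem, by simp⟩
  | inv _ _ ih =>
    obtain ⟨p, hp, q, hq, rfl⟩ := ih
    exact ⟨q, hq, p, hp, by group⟩
  | mul _ _ _ _ ihx ihy =>
    obtain ⟨p, hp, q, hq, rfl⟩ := ihx
    obtain ⟨p', hp', q', hq', rfl⟩ := ihy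
    exact ⟨p * (q⁻¹ * p' * q), P.mul_mem hp (hP p' hp' q hq), q' * q, P.mul_mem hq' hq,
      by group⟩

end ConjugationInvariantSubmonoid

namespace CGroup

variable {O : Set G}

theorem of_mul_of_eq_of_mul_of_conj (hO : ∀ g ∈ O, ∀ h : G, h⁻¹ * g * h ∈ O) (a b : O) :
    PresentedGroup.of (rels := cGroupRels O) a * PresentedGroup.of b =
      PresentedGroup.of b * PresentedGroup.of (⟨(b : G)⁻¹ * a * b, hO a a.2 b⟩ : O) := by
  have hrel := PresentedGroup.mk_eq_mk_of_mul_inv_mem (rels := cGroupRels O)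
    (x := FreeGroup.of a * FreeGroup.of b)
    (y := FreeGroup.of b * FreeGroup.of ⟨_, hO a a.2 b⟩) (Or.inl ⟨a, b, hO a a.2 b, rfl⟩)
  rwa [map_mul, map_mul] at hrel

theorem Positive.inv_mul_mul (hO : ∀ g ∈ O, ∀ h : G, h⁻¹ * g * h ∈ O) {p q : CGroup O}
    (hp : p.Positive) (hq : q.Positive) : (q⁻¹ * p * q).Positive := by
  refine Submonoid.inv_mul_mul_mem_closure ?_ hp hq
  rintro _ ⟨b, rfl⟩ _ ⟨a, rfl⟩
  rw [mul_assoc, of_mul_of_eq_of_mul_of_conj hO, inv_mul_cancel_left]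
  exact Submonoid.subset_closure ⟨_, rfl⟩

end CGroup

theorem cGroup_eq_positive_mul_inv_positive_general (O : Set G)
    (hO : ∀ g ∈ O, ∀ h : G, h⁻¹ * g * h ∈ O)
    (x : CGroup O) :
    ∃ g₁ g₂ : CGroup O, CGroup.Positive g₁ ∧ CGroup.Positive g₂ ∧ x = g₁ * g₂⁻¹ := by
  have hx : x ∈ Subgroup.closure (Submonoid.closure
      (Set.range (PresentedGroup.of (rels := cGroupRels O))) : Set (CGroup O)) := by
    refine Subgroup.closure_mono Submonoid.subset_closure ?_
    simp
  obtain ⟨g₁, h₁, g₂, h₂, rfl⟩ := Submonoid.exists_eq_mul_inv_of_mem_closure _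
    (fun _ hp _ hq => CGroup.Positive.inv_mul_mul hO hp hq) hx
  exact ⟨g₁, g₂, h₁, h₂, rfl⟩

/-- Lemma 1.2: every element of the C-group `Ĝ_O` associated to an equipped group
`(G,O)` (with `O` conjugation-invariant, `1 ∉ O`) can be written as `ĝ₁ ĝ₂⁻¹` with
`ĝ₁, ĝ₂` positive. -/
theorem cGroup_eq_positive_mul_inv_positive (O : Set G)
    (hO : ∀ g ∈ O, ∀ h : G, h⁻¹ * g * h ∈ O) (h1 : (1 : G) ∉ O)
    (x : CGroup O) :
    ∃ g₁ g₂ : CGroup O, CGroup.Positive g₁ ∧ CGroup.Positive g₂ ∧ x = g₁ * g₂⁻¹ :=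
  cGroup_eq_positive_mul_inv_positive_general O hO x
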